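/- If a is an ε-almost unitary element of a unital C*-algebra A with ε ∈ (0,1], and a = ω(a)(a*a)^{1/2} is its polar decomposition (where ω(a) := a(a*a)^{−1/2}), then ω(a) is a unitary and ‖a − ω(a)‖ < ε. -/
import Mathlib

/-- If `a` is an ε-almost unitary (ε ∈ (0,1]) then ω(a) := a (a*a)^{-1/2} is a unitary
with ‖a - ω(a)‖ < ε. -/
theorem almost_unitary_polar {A : Type*} [CStarAlgebra A] (a : A) (ε : ℝ)
    (hε0 : 0 < ε) (hε1 : ε ≤ 1)
    (h1 : ‖star a * a - 1‖ < ε) (h2 : ‖a * star a - 1‖ < ε) :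
    a * cfc (fun x : ℝ => x ^ (-(1/2) : ℝ)) (star a * a) ∈ unitary A ∧
    ‖a - a * cfc (fun x : ℝ => x ^ (-(1/2) : ℝ)) (star a * a)‖ < ε := by
  rcases subsingleton_or_nontrivial A with hA | hA
  · constructor
    · rw [Unitary.mem_iff]
      exact ⟨Subsingleton.elim _ _, Subsingleton.elim _ _⟩
    · rw [Subsingleton.elim (a - _) (0 : A), norm_zero]
      exact hε0
  set b := star a * a with hb_def
  have hb : IsSelfAdjoint b := IsSelfAdjoint.star_mul_self a
  set f : ℝ → ℝ := fun x => x ^ (-(1/2) : ℝ) with hf_def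
  set g : ℝ → ℝ := fun x => x ^ ((1/2) : ℝ) with hg_def
  -- spectrum estimates
  have hspec : ∀ x ∈ spectrum ℝ b, |x - 1| ≤ ‖b - 1‖ := by
    intro x hx
    have hmem : x - 1 ∈ spectrum ℝ (b - algebraMap ℝ A 1) := by
      rw [← spectrum.sub_singleton_eq]
      exact Set.sub_mem_sub hx rfl
    rw [map_one] at hmem
    simpa using spectrum.norm_le_norm_of_mem hmem
  have hspec' : ∀ x ∈ spectrum ℝ b, |x - 1| < ε := fun x hx => (hspec x hx).trans_lt h1
  have hpos : ∀ x ∈ spectrum ℝ b, 0 < x := by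
    intro x hx
    have := abs_lt.mp (hspec' x hx)
    linarith [this.1]
  have hf : ContinuousOn f (spectrum ℝ b) := fun x hx =>
    (Real.continuousAt_rpow_const x _ (Or.inl (hpos x hx).ne')).continuousWithinAt
  have hg : ContinuousOn g (spectrum ℝ b) := fun x hx =>
    (Real.continuousAt_rpow_const x _ (Or.inl (hpos x hx).ne')).continuousWithinAt
  have hfid : ContinuousOn (fun x : ℝ => f x * x) (spectrum ℝ b) := hf.mul continuousOn_id
  -- f(b) * g(b) = 1 and g(b) * f(b) = 1
  have hfg : cfc f b * cfc g b = 1 := by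
    rw [← cfc_mul f g b hf hg]
    have : cfc (fun x => f x * g x) b = cfc (1 : ℝ → ℝ) b := by
      apply cfc_congr
      intro x hx
      have hx0 := hpos x hx
      simp only [f, g, Pi.one_apply]
      rw [← Real.rpow_add hx0]
      norm_num
    rw [this, cfc_one ℝ b]
  have hgf : cfc g b * cfc f b = 1 := by
    rw [← cfc_mul g f b hg hf]
    have : cfc (fun x => g x * f x) b = cfc (1 : ℝ → ℝ) b := by
      apply cfc_congr
      intro x hx
      have hx0 := hpos x hx
      simp only [f, g, Pi.one_apply]
      rw [← Real.rpow_add hx0]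
      norm_num
    rw [this, cfc_one ℝ b]
  set ω := a * cfc f b with hω_def
  have hstar_cfc : star (cfc f b) = cfc f b := by
    rw [← cfc_star f b]
    exact cfc_congr fun x _ => star_trivial _
  -- star ω * ω = 1
  have key : cfc f b * b * cfc f b = 1 := by
    have e1 : cfc (fun x => f x * x) b = cfc f b * b := by
      rw [cfc_mul f (fun x => x) b hf (continuous_id.continuousOn), cfc_id' ℝ b]
    have e2 : cfc (fun x => f x * x * f x) b = cfc f b * b * cfc f b := by
      rw [cfc_mul _ f b hfid hf, e1]
    rw [← e2]
    calc cfc (fun x => f x * x * f x) b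
        = cfc (1 : ℝ → ℝ) b := by
          apply cfc_congr
          intro x hx
          have hx0 := hpos x hx
          simp only [f, Pi.one_apply]
          nth_rewrite 2 [← Real.rpow_one x]
          rw [← Real.rpow_add hx0, ← Real.rpow_add hx0]
          norm_num
      _ = 1 := cfc_one ℝ b
  have hsωω : star ω * ω = 1 := by
    calc star ω * ω = cfc f b * b * cfc f b := by
          rw [hω_def, star_mul, hstar_cfc, hb_def]
          noncomm_ring
      _ = 1 := key
  -- a is a unit
  have hub : IsUnit b := by
    have : ‖(1 : A) - b‖ < 1 := by
      rw [norm_sub_rev]; exact h1.trans_le hε1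
    simpa using (Units.oneSub (1 - b) this).isUnit
  have huv : IsUnit (a * star a) := by
    have : ‖(1 : A) - a * star a‖ < 1 := by
      rw [norm_sub_rev]; exact h2.trans_le hε1
    simpa using (Units.oneSub (1 - a * star a) this).isUnit
  have hua : IsUnit a := by
    obtain ⟨u, hu⟩ := hub
    obtain ⟨v, hv⟩ := huv
    have hleft : (↑u⁻¹ * star a) * a = 1 := by
      rw [mul_assoc, ← hb_def, ← hu, u.inv_mul]
    have hright : a * (star a * ↑v⁻¹) = 1 := by
      rw [← mul_assoc, ← hv, v.mul_inv]
    have heq : (↑u⁻¹ * star a : A) = star a * ↑v⁻¹ := by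
      calc (↑u⁻¹ * star a : A) = (↑u⁻¹ * star a) * (a * (star a * ↑v⁻¹)) := by
            rw [hright, mul_one]
        _ = ((↑u⁻¹ * star a) * a) * (star a * ↑v⁻¹) := by noncomm_ring
        _ = star a * ↑v⁻¹ := by rw [hleft, one_mul]
    exact ⟨⟨a, star a * ↑v⁻¹, hright, heq ▸ hleft⟩, rfl⟩
  have hucfc : IsUnit (cfc f b) := ⟨⟨cfc f b, cfc g b, hfg, hgf⟩, rfl⟩
  have huω : IsUnit ω := hua.mul hucfc
  have hωsω : ω * star ω = 1 := by
    obtain ⟨w, hw⟩ := huω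
    have h1' : ω * ↑w⁻¹ = 1 := by rw [← hw]; exact w.mul_inv
    have h2' : star ω = ↑w⁻¹ := left_inv_eq_right_inv hsωω h1'
    rw [h2', h1']
  have hmem : ω ∈ unitary A := Unitary.mem_iff.mpr ⟨hsωω, hωsω⟩
  refine ⟨hmem, ?_⟩
  -- norm estimate
  have haω : a = ω * cfc g b := by
    rw [hω_def, mul_assoc, hfg, mul_one]
  have hdiff : a - ω = ω * (cfc g b - 1) := by
    rw [mul_sub, ← haω, mul_one]
  rw [hdiff, CStarRing.norm_mem_unitary_mul _ hmem]
  have hcfc_sub : cfc g b - 1 = cfc (fun x => g x - 1) b := by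
    rw [cfc_sub g (fun _ => (1:ℝ)) b hg continuousOn_const, cfc_const_one ℝ b]
  rw [hcfc_sub]
  have hbound : ∀ x ∈ spectrum ℝ b, ‖g x - 1‖ ≤ ‖b - 1‖ := by
    intro x hx
    have hx0 := hpos x hx
    have hsq : g x ^ 2 = x := by
      simp only [g]
      rw [← Real.rpow_natCast (x ^ ((1/2):ℝ)) 2, ← Real.rpow_mul hx0.le]
      norm_num
    have hgnn : 0 ≤ g x := Real.rpow_nonneg hx0.le _
    have h2 : |g x - 1| ≤ |x - 1| := by
      have hsqle : (g x - 1)^2 ≤ (x - 1)^2 := by nlinarith [sq_nonneg (g x - 1), sq_nonneg (g x + 1)]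
      have := Real.sqrt_le_sqrt hsqle
      rwa [Real.sqrt_sq_eq_abs, Real.sqrt_sq_eq_abs] at this
    calc ‖g x - 1‖ = |g x - 1| := rfl
      _ ≤ |x - 1| := h2
      _ ≤ ‖b - 1‖ := hspec x hx
  exact (norm_cfc_le (norm_nonneg _) hbound).trans_lt h1
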